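/- Let Σ* be a symmetric positive definite d×d real matrix and Σ a symmetric positive semidefinite d×d real matrix. Then the matrix S = S(Σ*,Σ) = Σ*^{-1/2}(Σ*^{1/2}ΣΣ*^{1/2})^{1/2}Σ*^{-1/2} is symmetric positive semidefinite and satisfies S Σ* S = Σ. Consequently, with a = m − S m* and V = S − I_d for any m, m* ∈ ℝ^d, one has a + (V+I_d)m* = m and (V+I_d)Σ*(V+I_d) = Σ, i.e., ξ_{μ*}(φ_{μ*}(N(m,Σ))) = N(m,Σ). -/

import Mathlib

open MeasureTheory Matrix Filter ProbabilityTheory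

open Classical in
/-- The unique symmetric positive semidefinite square root of a positive semidefinite real
matrix (junk value `0` if the matrix is not positive semidefinite). -/
noncomputable def matSqrt {d : ℕ} (A : Matrix (Fin d) (Fin d) ℝ) : Matrix (Fin d) (Fin d) ℝ :=
  if h : A.PosSemidef then
    (h.1.eigenvectorUnitary : Matrix (Fin d) (Fin d) ℝ) *
      diagonal ((↑) ∘ (√·) ∘ h.1.eigenvalues) *
      (star h.1.eigenvectorUnitary : Matrix (Fin d) (Fin d) ℝ)
  else 0

/-- `S(Σ₁, Σ₂) = Σ₁^{-1/2} (Σ₁^{1/2} Σ₂ Σ₁^{1/2})^{1/2} Σ₁^{-1/2}`. -/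
noncomputable def Smat {d : ℕ} (S1 S2 : Matrix (Fin d) (Fin d) ℝ) : Matrix (Fin d) (Fin d) ℝ :=
  (matSqrt S1)⁻¹ * matSqrt (matSqrt S1 * S2 * matSqrt S1) * (matSqrt S1)⁻¹

open Classical in
/-- The Gaussian measure `N(m, Σ)` on `ℝ^d`, realized as the pushforward of a product of
standard real Gaussians under `x ↦ m + Σ^{1/2} x` (junk value `0` if `Σ` is not psd). -/
noncomputable def gaussianMeasure {d : ℕ} (m : Fin d → ℝ) (S : Matrix (Fin d) (Fin d) ℝ) :
    Measure (Fin d → ℝ) :=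
  if _h : S.PosSemidef then
    (Measure.pi fun _ : Fin d => gaussianReal 0 1).map (fun x => m + (matSqrt S).mulVec x)
  else 0

/-- Squared euclidean distance on `ℝ^d`. -/
def sqDist {d : ℕ} (x y : Fin d → ℝ) : ℝ := ∑ i, (x i - y i) ^ 2

/-- The 2-Wasserstein distance between two measures on `ℝ^d` (with the euclidean cost). -/
noncomputable def W2 {d : ℕ} (μ ν : Measure (Fin d → ℝ)) : ℝ :=
  Real.sqrt (⨅ π ∈ {π : Measure ((Fin d → ℝ) × (Fin d → ℝ)) |
      IsProbabilityMeasure π ∧ π.map Prod.fst = μ ∧ π.map Prod.snd = ν},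
    ∫⁻ p, ENNReal.ofReal (sqDist p.1 p.2) ∂π).toReal

/-- The inner product `⟨(a,V),(b,U)⟩_{(m*,Σ*)}` on `Ξ_d`. -/
noncomputable def xiInner {d : ℕ} (ms : Fin d → ℝ) (Ss : Matrix (Fin d) (Fin d) ℝ)
    (a : Fin d → ℝ) (V : Matrix (Fin d) (Fin d) ℝ)
    (b : Fin d → ℝ) (U : Matrix (Fin d) (Fin d) ℝ) : ℝ :=
  (a + V.mulVec ms) ⬝ᵥ (b + U.mulVec ms) + (V * Ss * U).trace

/-- The squared norm `‖(a,V)‖²_{(m*,Σ*)} = ‖a + V m*‖² + tr(V Σ* V)` on `Ξ_d`. -/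
noncomputable def xiNormSq {d : ℕ} (ms : Fin d → ℝ) (Ss : Matrix (Fin d) (Fin d) ℝ)
    (a : Fin d → ℝ) (V : Matrix (Fin d) (Fin d) ℝ) : ℝ :=
  (∑ i, (a i + V.mulVec ms i) ^ 2) + (V * Ss * V).trace

/-- The norm `‖(a,V)‖_{(m*,Σ*)}` on `Ξ_d`. -/
noncomputable def xiNorm {d : ℕ} (ms : Fin d → ℝ) (Ss : Matrix (Fin d) (Fin d) ℝ)
    (a : Fin d → ℝ) (V : Matrix (Fin d) (Fin d) ℝ) : ℝ :=
  Real.sqrt (xiNormSq ms Ss a V)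

/-
`Σ*^{1/2} Σ Σ*^{1/2}` is positive semidefinite, so its square root `T` satisfies
`T² = Σ*^{1/2} Σ Σ*^{1/2}`. Hence `S = Σ*^{-1/2} T Σ*^{-1/2}` is a congruence of `T` by a
symmetric matrix, and `S Σ* S = Σ*^{-1/2} T² Σ*^{-1/2} = Σ`. Everything else reduces to
`(S - I) + I = S`.
-/

lemma Matrix.PosSemidef.mul_mul_of_isHermitian {n R : Type*} [Fintype n] [Ring R]
    [PartialOrder R] [StarRing R] {A B : Matrix n n R} (hA : A.PosSemidef) (hB : B.IsHermitian) :
    (B * A * B).PosSemidef := by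
  simpa only [hB.eq] using hA.mul_mul_conjTranspose_same B

section MatSqrt

variable {d : ℕ} {A : Matrix (Fin d) (Fin d) ℝ}

lemma matSqrt_eq_conjStarAlgAut (hA : A.PosSemidef) :
    matSqrt A = Unitary.conjStarAlgAut ℝ _ hA.1.eigenvectorUnitary
      (diagonal ((↑) ∘ (√·) ∘ hA.1.eigenvalues)) := by
  rw [matSqrt, dif_pos hA, Unitary.conjStarAlgAut_apply]

lemma matSqrt_posSemidef (hA : A.PosSemidef) : (matSqrt A).PosSemidef := by
  rw [matSqrt, dif_pos hA, Matrix.star_eq_conjTranspose]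
  refine PosSemidef.mul_mul_conjTranspose_same ?_ _
  simp [Real.sqrt_nonneg]

lemma matSqrt_mul_self (hA : A.PosSemidef) : matSqrt A * matSqrt A = A := by
  conv_rhs => rw [hA.1.spectral_theorem]
  rw [matSqrt_eq_conjStarAlgAut hA, ← map_mul, diagonal_mul_diagonal]
  congr 2
  funext i
  simp [Real.mul_self_sqrt (hA.eigenvalues_nonneg i)]

lemma isUnit_det_matSqrt (hA : A.PosDef) : IsUnit (matSqrt A).det := by
  have hdet : (matSqrt A).det * (matSqrt A).det = A.det := by
    rw [← det_mul, matSqrt_mul_self hA.posSemidef]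
  exact isUnit_of_mul_isUnit_left (hdet ▸ hA.det_pos.ne'.isUnit)

end MatSqrt

section Smat

variable {d : ℕ} {S₁ S₂ : Matrix (Fin d) (Fin d) ℝ}

lemma Smat_posSemidef (h₁ : S₁.PosSemidef) (h₂ : S₂.PosSemidef) :
    (Smat S₁ S₂).PosSemidef := by
  have hR := matSqrt_posSemidef h₁
  exact (matSqrt_posSemidef (h₂.mul_mul_of_isHermitian hR.1)).mul_mul_of_isHermitian hR.inv.1

lemma Smat_mul_mul_Smat (h₁ : S₁.PosDef) (h₂ : S₂.PosSemidef) :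
    Smat S₁ S₂ * S₁ * Smat S₁ S₂ = S₂ := by
  set R := matSqrt S₁
  have hR : IsUnit R.det := isUnit_det_matSqrt h₁
  have hB : (R * S₂ * R).PosSemidef :=
    h₂.mul_mul_of_isHermitian (matSqrt_posSemidef h₁.posSemidef).1
  set T := matSqrt (R * S₂ * R)
  calc Smat S₁ S₂ * S₁ * Smat S₁ S₂
        = R⁻¹ * T * R⁻¹ * (R * R) * (R⁻¹ * T * R⁻¹) := by
        rw [matSqrt_mul_self h₁.posSemidef]; rfl
    _ = R⁻¹ * (T * T) * R⁻¹ := by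
        simp only [Matrix.mul_assoc, nonsing_inv_mul_cancel_left _ _ hR,
          mul_nonsing_inv_cancel_left _ _ hR]
    _ = S₂ := by
        rw [matSqrt_mul_self hB]
        simp only [Matrix.mul_assoc, nonsing_inv_mul_cancel_left _ _ hR, mul_nonsing_inv _ hR,
          Matrix.mul_one]

end Smat

/-- For `Σ*` symmetric positive definite and `Σ` symmetric positive
semidefinite, `S = S(Σ*,Σ)` is symmetric positive semidefinite and satisfies `SΣ*S = Σ`.
Consequently, with `a = m − Sm*` and `V = S − I`, one has `a + (V+I)m* = m` and
`(V+I)Σ*(V+I) = Σ`, i.e. `ξ_{μ*}(φ_{μ*}(N(m,Σ))) = N(m,Σ)`. -/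
theorem stmt_7 {d : ℕ} (m ms : Fin d → ℝ) (S Ss : Matrix (Fin d) (Fin d) ℝ)
    (hSs : Ss.PosDef) (hS : S.PosSemidef) :
    (Smat Ss S).PosSemidef ∧
    Smat Ss S * Ss * Smat Ss S = S ∧
    (m - (Smat Ss S).mulVec ms) + ((Smat Ss S - 1) + 1).mulVec ms = m ∧
    ((Smat Ss S - 1) + 1) * Ss * ((Smat Ss S - 1) + 1) = S ∧
    gaussianMeasure ((m - (Smat Ss S).mulVec ms) + ((Smat Ss S - 1) + 1).mulVec ms)
        (((Smat Ss S - 1) + 1) * Ss * ((Smat Ss S - 1) + 1))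
      = gaussianMeasure m S := by
  have hSmat := Smat_mul_mul_Smat hSs hS
  simp only [sub_add_cancel, true_and]
  exact ⟨Smat_posSemidef hSs.posSemidef hS, hSmat, hSmat, by rw [hSmat]⟩
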